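/- arXiv:2311.01947 — 2 statements merged into one kernel-verified Lean document; each statement's English description precedes it below -/
import Mathlib

section
/- Let n ≥ 1 be an integer. There exist a length m and an 8-divisible linear code over F_4 of effective length n if and only if n does not belong to the set {2,4,6,12,14,22} ∪ {1,3,5,7,9,11,13,15,17,19,23,25,27,33,35,43}; equivalently, if and only if n can be written as a non-negative integer combination of 8, 10, and 21. -/
open Module Finset

noncomputable section
open scoped Classical

variable (F : Type) [Field F] [Fintype F]

instance finiteSubmodule (v : ℕ) : Finite (Submodule F (Fin v → F)) :=
  Finite.of_injective (fun s => (s : Set (Fin v → F))) SetLike.coe_injective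

/-- The points of `PG(v-1,q)`: one-dimensional subspaces of `F_q^v`. -/
abbrev PGPoint (v : ℕ) := {W : Submodule F (Fin v → F) // finrank F W = 1}

instance (v : ℕ) : Fintype (PGPoint F v) := Fintype.ofFinite _

/-- Cardinality of a multiset of points. -/
def mCard {v : ℕ} (M : PGPoint F v → ℕ) : ℕ := ∑ P, M P

/-- Multiplicity of a subspace: the sum of multiplicities over points contained in it. -/
def mVal {v : ℕ} (M : PGPoint F v → ℕ) (S : Submodule F (Fin v → F)) : ℕ :=
  ∑ P : PGPoint F v, if P.1 ≤ S then M P else 0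

/-- A multiset of points is `Δ`-divisible if `#M ≡ M(H) (mod Δ)` for every hyperplane `H`. -/
def IsDivisibleMultiset {v : ℕ} (Δ : ℕ) (M : PGPoint F v → ℕ) : Prop :=
  ∀ H : Submodule F (Fin v → F), finrank F H = v - 1 → mCard F M ≡ mVal F M H [MOD Δ]

/-- A set of points is `Δ`-divisible if `|S| ≡ |S ∩ H| (mod Δ)` for every hyperplane `H`. -/
def IsDivisibleSet {v : ℕ} (Δ : ℕ) (S : Set (PGPoint F v)) : Prop :=
  ∀ H : Submodule F (Fin v → F), finrank F H = v - 1 →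
    S.ncard ≡ (S ∩ {P | P.1 ≤ H}).ncard [MOD Δ]

/-- A linear code `C ≤ F_q^m` is `Δ`-divisible if all Hamming weights are divisible by `Δ`. -/
def IsDivisibleCode {m : ℕ} (Δ : ℕ) (C : Submodule F (Fin m → F)) : Prop :=
  ∀ c ∈ C, Δ ∣ hammingNorm c

/-- The effective length: the number of coordinates where some codeword is nonzero. -/
def effLength {m : ℕ} (C : Submodule F (Fin m → F)) : ℕ :=
  Nat.card {i : Fin m // ∃ c ∈ C, c i ≠ 0}

/-- `s_q(a,b,i)`, with `q = p^e`, written without division: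
`s_q(a,b,0) = 1 + q + ⋯ + q^a` and `s_q(a,b,i) = p^{ie-b}·(1 + q + ⋯ + q^{a-i})` for `i ≥ 1`. -/
def sQ (p e a b i : ℕ) : ℕ :=
  if i = 0 then ∑ j ∈ Finset.range (a + 1), (p ^ e) ^ j
  else p ^ (i * e - b) * ∑ j ∈ Finset.range (a - i + 1), (p ^ e) ^ j

/-!
Over `𝔽₄`, double counting the nonzero coordinates of the codewords gives
`4 · ∑_{c ∈ C} wt c = 3 n |C|` for a code of effective length `n`, so some codeword has weight
`w > 3n/4`. Summing the weights of the pencil `d + a c` (`a ∈ 𝔽₄`) shows that, in an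
`8`-divisible code, every codeword has even weight outside the support of `c`; the residual code
of `c`, of effective length `n - w`, is therefore even, and averaging again shows that an even
code over `𝔽₄` cannot have effective length `1` or `3`. A multiple `w` of `8` with
`3n/4 < w ≤ n` and `n - w ∉ {1, 3}` exists for no exceptional `n`.

Conversely, the simplex codes of dimensions `1`, `2`, `3` over `𝔽₄` have lengths `1`, `5`, `21`
and constant weights `1`, `4`, `16`; repeating the first eight times and the second twice gives
`8`-divisible codes of effective lengths `8` and `10`, and direct sums realize every
`8x + 10y + 21z`. These are exactly the non-exceptional lengths.
-/

open scoped LinearAlgebra.Projectivization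

section LinearAlgebra

variable {K : Type*} [Field K] [Fintype K]

theorem LinearMap.card_mul_card_ker {V : Type*} [AddCommGroup V] [Module K V] [Fintype V]
    (φ : V →ₗ[K] K) (hφ : φ ≠ 0) :
    Fintype.card K * Nat.card (LinearMap.ker φ) = Fintype.card V := by
  rw [← Nat.card_eq_fintype_card, ← Nat.card_eq_fintype_card,
    Submodule.card_eq_card_quotient_mul_card (LinearMap.ker φ), mul_comm,
    Nat.card_congr (φ.quotKerEquivOfSurjective (LinearMap.surjective_of_ne_zero hφ)).toEquiv]

theorem LinearMap.card_mul_card_filter_ne_zero {V : Type*} [AddCommGroup V] [Module K V]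
    [Fintype V] (φ : V →ₗ[K] K) (hφ : φ ≠ 0) :
    Fintype.card K * #{v | φ v ≠ 0} = (Fintype.card K - 1) * Fintype.card V := by
  have hker : #{v | φ v = 0} = Nat.card (LinearMap.ker φ) := by
    rw [Nat.card_eq_fintype_card, ← Fintype.card_subtype]
    rfl
  have hsplit := Finset.card_filter_add_card_filter_not (s := univ) (fun v => φ v = 0)
  have hq := φ.card_mul_card_ker hφ
  rw [card_univ, hker] at hsplit
  rw [Nat.sub_one_mul, ← hsplit, mul_add]
  simp only [ne_eq] at *
  omega

theorem card_filter_add_mul_ne_zero (x y : K) :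
    #{a : K | y + a * x ≠ 0} =
      (if x ≠ 0 then Fintype.card K - 1 else 0) +
        (if x = 0 ∧ y ≠ 0 then Fintype.card K else 0) := by
  by_cases hx : x = 0
  · by_cases hy : y = 0 <;> simp [hx, hy]
  · have : ({a : K | y + a * x ≠ 0} : Finset K) = univ.erase (-y / x) := by
      ext a
      simp only [mem_filter, mem_univ, true_and, mem_erase, and_true, ne_eq]
      rw [not_iff_not, eq_div_iff hx]
      constructor <;> intro h <;> linear_combination h
    simp [this, hx, card_erase_of_mem]

end LinearAlgebra

section Codes

variable {F} {K : Type*} [Field K] {ι : Type*}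

def codeSupport [Fintype ι] (C : Submodule K (ι → K)) : Finset ι := {i | ∃ c ∈ C, c i ≠ 0}

theorem mem_codeSupport [Fintype ι] {C : Submodule K (ι → K)} {i : ι} :
    i ∈ codeSupport C ↔ ∃ c ∈ C, c i ≠ 0 := by
  simp [codeSupport]

theorem effLength_eq_card_codeSupport {m : ℕ} (C : Submodule F (Fin m → F)) :
    effLength F C = #(codeSupport C) := by
  rw [effLength, Nat.card_eq_fintype_card, Fintype.card_subtype, codeSupport]
  convert rfl

theorem hammingNorm_le_card_codeSupport [Fintype ι] {C : Submodule K (ι → K)} {c : ι → K}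
    (hc : c ∈ C) : hammingNorm c ≤ #(codeSupport C) :=
  card_le_card fun _ hi => mem_codeSupport.2 ⟨c, hc, (mem_filter.1 hi).2⟩

section Counting

variable [Fintype K] [Fintype ι]

theorem card_mul_sum_hammingNorm (C : Submodule K (ι → K)) :
    Fintype.card K * ∑ c : C, hammingNorm (c : ι → K) =
      (Fintype.card K - 1) * #(codeSupport C) * Fintype.card C := by
  have hcoord : ∀ i, Fintype.card K * #{c : C | (c : ι → K) i ≠ 0} =
      if i ∈ codeSupport C then (Fintype.card K - 1) * Fintype.card C else 0 := by
    intro i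
    split_ifs with hi
    · obtain ⟨c, hc, hci⟩ := mem_codeSupport.1 hi
      refine ((LinearMap.proj i).comp C.subtype).card_mul_card_filter_ne_zero fun h => hci ?_
      exact LinearMap.congr_fun h ⟨c, hc⟩
    · simp only [mem_codeSupport, not_exists, not_and, not_not] at hi
      simp [hi]
  simp only [hammingNorm, card_filter]
  rw [sum_comm, mul_sum]
  simp only [← card_filter, hcoord, sum_ite_mem, univ_inter, sum_const, smul_eq_mul]
  ring

theorem exists_mem_card_codeSupport_lt (C : Submodule K (ι → K)) (hC : 0 < #(codeSupport C)) :
    ∃ c ∈ C, (Fintype.card K - 1) * #(codeSupport C) < Fintype.card K * hammingNorm c := by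
  by_contra! h
  have hsum : Fintype.card K * ∑ c : C, hammingNorm (c : ι → K) ≤
      (Fintype.card C - 1) * ((Fintype.card K - 1) * #(codeSupport C)) := by
    rw [mul_sum, ← sum_erase (f := fun c : C => Fintype.card K * hammingNorm (c : ι → K)) (a := 0) _
      (by simp)]
    calc _ ≤ #((univ : Finset C).erase 0) • ((Fintype.card K - 1) * #(codeSupport C)) :=
          sum_le_card_nsmul _ _ _ fun c _ => h c c.2
      _ = _ := by simp [card_erase_of_mem]
  have ha : 0 < (Fintype.card K - 1) * #(codeSupport C) :=
    Nat.mul_pos (Nat.sub_pos_of_lt Fintype.one_lt_card) hC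
  rw [card_mul_sum_hammingNorm] at hsum
  generalize (Fintype.card K - 1) * #(codeSupport C) = a at hsum ha
  have : a ≤ a * Fintype.card C := Nat.le_mul_of_pos_right a Fintype.card_pos
  rw [Nat.sub_one_mul, mul_comm (Fintype.card C)] at hsum
  omega

theorem sum_hammingNorm_add_smul (c d : ι → K) :
    ∑ a : K, hammingNorm (d + a • c) =
      (Fintype.card K - 1) * hammingNorm c + Fintype.card K * #{i | c i = 0 ∧ d i ≠ 0} := by
  have hswap : ∑ a : K, hammingNorm (d + a • c) = ∑ i, #{a : K | d i + a * c i ≠ 0} := by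
    simp only [hammingNorm, card_filter, Pi.add_apply, Pi.smul_apply, smul_eq_mul]
    exact sum_comm
  rw [hswap]
  simp only [card_filter_add_mul_ne_zero, sum_add_distrib]
  rw [← sum_filter, ← sum_filter, sum_const, sum_const, smul_eq_mul, smul_eq_mul, hammingNorm,
    mul_comm, mul_comm (#_)]

end Counting

-- The residual code of `c`, kept at length `ι`: the support of `c` is zeroed rather than deleted.
def residualCode (C : Submodule K (ι → K)) (c : ι → K) : Submodule K (ι → K) :=
  C.map (LinearMap.pi fun i => if c i = 0 then LinearMap.proj i else 0)

theorem mem_residualCode {C : Submodule K (ι → K)} {c d' : ι → K} :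
    d' ∈ residualCode C c ↔ ∃ d ∈ C, (fun i => if c i = 0 then d i else 0) = d' := by
  refine exists_congr fun d => and_congr_right fun _ => Eq.congr_left (funext fun i => ?_)
  split_ifs <;> simp [*]

theorem codeSupport_residualCode [Fintype ι] (C : Submodule K (ι → K)) (c : ι → K) :
    codeSupport (residualCode C c) = {i ∈ codeSupport C | c i = 0} := by
  ext i
  simp only [mem_filter, mem_codeSupport, mem_residualCode]
  constructor
  · rintro ⟨_, ⟨d, hd, rfl⟩, hi⟩
    dsimp only at hi
    split_ifs at hi with hci
    exacts [⟨⟨d, hd, hi⟩, hci⟩, absurd rfl hi]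
  · rintro ⟨⟨d, hd, hi⟩, hci⟩
    exact ⟨_, ⟨d, hd, rfl⟩, by simpa [hci]⟩

theorem card_codeSupport_residualCode_add [Fintype ι] {C : Submodule K (ι → K)} {c : ι → K}
    (hc : c ∈ C) : #(codeSupport (residualCode C c)) + hammingNorm c = #(codeSupport C) := by
  have hsupp : {i ∈ codeSupport C | ¬c i = 0} = ({i | c i ≠ 0} : Finset ι) := by
    ext i
    simp only [mem_filter, mem_univ, true_and, and_iff_right_iff_imp]
    exact fun hi => mem_codeSupport.2 ⟨c, hc, hi⟩
  rw [codeSupport_residualCode, hammingNorm, ← hsupp, card_filter_add_card_filter_not]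

section Quaternary

variable [Fintype K] [Fintype ι]

theorem two_dvd_card_filter_of_eight_dvd {C : Submodule K (ι → K)} (hK : Fintype.card K = 4)
    (hC : ∀ c ∈ C, 8 ∣ hammingNorm c) {c d : ι → K} (hc : c ∈ C) (hd : d ∈ C) :
    2 ∣ #{i | c i = 0 ∧ d i ≠ 0} := by
  have hsum : 8 ∣ ∑ a : K, hammingNorm (d + a • c) :=
    dvd_sum fun a _ => hC _ (C.add_mem hd (C.smul_mem a hc))
  rw [sum_hammingNorm_add_smul, hK] at hsum
  have := hC c hc
  omega

theorem two_dvd_hammingNorm_of_mem_residualCode {C : Submodule K (ι → K)}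
    (hK : Fintype.card K = 4) (hC : ∀ c ∈ C, 8 ∣ hammingNorm c) {c : ι → K} (hc : c ∈ C) :
    ∀ d' ∈ residualCode C c, 2 ∣ hammingNorm d' := by
  intro d' hd'
  obtain ⟨d, hd, rfl⟩ := mem_residualCode.1 hd'
  simpa [hammingNorm] using two_dvd_card_filter_of_eight_dvd hK hC hc hd

theorem card_codeSupport_ne_one_and_ne_three (C : Submodule K (ι → K)) (hK : Fintype.card K = 4)
    (hC : ∀ c ∈ C, 2 ∣ hammingNorm c) : #(codeSupport C) ≠ 1 ∧ #(codeSupport C) ≠ 3 := by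
  by_contra! h
  obtain ⟨c, hc, hlt⟩ := exists_mem_card_codeSupport_lt C (by omega)
  have := hC c hc
  have := hammingNorm_le_card_codeSupport hc
  rw [hK] at hlt
  omega

end Quaternary
end Codes

def exceptionalLengths : Set ℕ :=
  {2, 4, 6, 12, 14, 22} ∪ {1, 3, 5, 7, 9, 11, 13, 15, 17, 19, 23, 25, 27, 33, 35, 43}

theorem card_codeSupport_notMem_exceptionalLengths {K ι : Type*} [Field K] [Fintype K]
    [Fintype ι] {C : Submodule K (ι → K)} (hK : Fintype.card K = 4)
    (hC : ∀ c ∈ C, 8 ∣ hammingNorm c) : #(codeSupport C) ∉ exceptionalLengths := by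
  obtain h0 | hpos := Nat.eq_zero_or_pos #(codeSupport C)
  · simp [exceptionalLengths, h0]
  obtain ⟨c, hc, hlt⟩ := exists_mem_card_codeSupport_lt C hpos
  have hres := card_codeSupport_residualCode_add hc
  obtain ⟨h1, h3⟩ := card_codeSupport_ne_one_and_ne_three _ hK
    (two_dvd_hammingNorm_of_mem_residualCode hK hC hc)
  have h8 := hC c hc
  have hle := hammingNorm_le_card_codeSupport hc
  rw [hK] at hlt
  simp only [exceptionalLengths, Set.mem_union, Set.mem_insert_iff, Set.mem_singleton_iff]
  omega

-- The least elements of `10ℕ + 21ℕ` in the residue classes `0, …, 7` mod `8` are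
-- `0, 41, 10, 51, 20, 21, 30, 31`.
theorem exists_eq_of_notMem_exceptionalLengths {n : ℕ} (h : n ∉ exceptionalLengths) :
    ∃ x y z : ℕ, n = 8 * x + 10 * y + 21 * z := by
  simp only [exceptionalLengths, Set.mem_union, Set.mem_insert_iff, Set.mem_singleton_iff] at h
  obtain h | h | h | h | h | h | h | h : n % 8 = 0 ∨ n % 8 = 1 ∨ n % 8 = 2 ∨ n % 8 = 3 ∨
      n % 8 = 4 ∨ n % 8 = 5 ∨ n % 8 = 6 ∨ n % 8 = 7 := by omega
  · exact ⟨n / 8, 0, 0, by omega⟩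
  · exact ⟨(n - 41) / 8, 2, 1, by omega⟩
  · exact ⟨(n - 10) / 8, 1, 0, by omega⟩
  · exact ⟨(n - 51) / 8, 3, 1, by omega⟩
  · exact ⟨(n - 20) / 8, 2, 0, by omega⟩
  · exact ⟨(n - 21) / 8, 0, 1, by omega⟩
  · exact ⟨(n - 30) / 8, 3, 0, by omega⟩
  · exact ⟨(n - 31) / 8, 1, 1, by omega⟩

section Constructions

variable {K : Type} [Field K]

theorem card_filter_sum {α β : Type*} [Fintype α] [Fintype β] (p : α ⊕ β → Prop)
    [DecidablePred p] :
    #{x | p x} = #{a | p (.inl a)} + #{b | p (.inr b)} := by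
  simp only [card_filter, Fintype.sum_sum_type]

theorem card_filter_fst {α β : Type*} [Fintype α] [Fintype β] (p : α → Prop) [DecidablePred p] :
    #{x : α × β | p x.1} = #{a | p a} * Fintype.card β := by
  rw [card_filter, card_filter, Fintype.sum_prod_type, sum_mul]
  simp [mul_comm, apply_ite]

theorem hammingNorm_sum_type {ι₁ ι₂ : Type*} [Fintype ι₁] [Fintype ι₂] (c : ι₁ ⊕ ι₂ → K) :
    hammingNorm c = hammingNorm (c ∘ Sum.inl) + hammingNorm (c ∘ Sum.inr) :=
  card_filter_sum fun x => c x ≠ 0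

theorem hammingNorm_comp_fst {ι κ : Type*} [Fintype ι] [Fintype κ] (c : ι → K) :
    hammingNorm (c ∘ Prod.fst : ι × κ → K) = hammingNorm c * Fintype.card κ :=
  card_filter_fst fun i => c i ≠ 0

theorem hammingNorm_comp_equiv {ι κ : Type*} [Fintype ι] [Fintype κ] (e : κ ≃ ι) (c : ι → K) :
    hammingNorm (c ∘ e) = hammingNorm c :=
  card_equiv e (by simp)

def directSumCode {ι₁ ι₂ : Type*} (C₁ : Submodule K (ι₁ → K)) (C₂ : Submodule K (ι₂ → K)) :
    Submodule K (ι₁ ⊕ ι₂ → K) :=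
  (C₁.prod C₂).comap (LinearEquiv.sumArrowLequivProdArrow ι₁ ι₂ K K).toLinearMap

theorem mem_directSumCode {ι₁ ι₂ : Type*} {C₁ : Submodule K (ι₁ → K)} {C₂ : Submodule K (ι₂ → K)}
    {c : ι₁ ⊕ ι₂ → K} : c ∈ directSumCode C₁ C₂ ↔ c ∘ Sum.inl ∈ C₁ ∧ c ∘ Sum.inr ∈ C₂ :=
  Iff.rfl

theorem card_codeSupport_directSumCode {ι₁ ι₂ : Type*} [Fintype ι₁] [Fintype ι₂]
    (C₁ : Submodule K (ι₁ → K)) (C₂ : Submodule K (ι₂ → K)) :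
    #(codeSupport (directSumCode C₁ C₂)) = #(codeSupport C₁) + #(codeSupport C₂) := by
  simp only [codeSupport]
  rw [card_filter_sum]
  congr 2 <;> ext i <;> simp only [mem_filter, mem_univ, true_and, mem_directSumCode]
  · refine ⟨fun ⟨c, hc, hci⟩ => ⟨_, hc.1, hci⟩, fun ⟨c, hc, hci⟩ => ⟨Sum.elim c 0, ?_, hci⟩⟩
    exact ⟨hc, zero_mem C₂⟩
  · refine ⟨fun ⟨c, hc, hci⟩ => ⟨_, hc.2, hci⟩, fun ⟨c, hc, hci⟩ => ⟨Sum.elim 0 c, ?_, hci⟩⟩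
    exact ⟨zero_mem C₁, hc⟩

def repetitionCode {ι : Type*} (C : Submodule K (ι → K)) (κ : Type*) : Submodule K (ι × κ → K) :=
  C.map (LinearMap.funLeft K K Prod.fst)

theorem card_codeSupport_repetitionCode {ι κ : Type*} [Fintype ι] [Fintype κ]
    (C : Submodule K (ι → K)) :
    #(codeSupport (repetitionCode C κ)) = #(codeSupport C) * Fintype.card κ := by
  have hsupp (x : ι × κ) : (∃ c ∈ repetitionCode C κ, c x ≠ 0) ↔ ∃ c ∈ C, c x.1 ≠ 0 := by
    simp [repetitionCode]
  simp only [codeSupport, hsupp]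
  exact card_filter_fst (β := κ) fun i => ∃ c ∈ C, c i ≠ 0

def simplexCode (K V : Type*) [Field K] [AddCommGroup V] [Module K V] : Submodule K (ℙ K V → K) :=
  LinearMap.range (LinearMap.pi fun p : ℙ K V => Module.Dual.eval K V p.rep)

theorem card_filter_ne_zero_eq_card_filter_rep_mul {V : Type*} [AddCommGroup V] [Module K V]
    [Fintype K] [Fintype V] [Fintype (ℙ K V)] (φ : Module.Dual K V) :
    #{v | φ v ≠ 0} = #{p : ℙ K V | φ p.rep ≠ 0} * (Fintype.card K - 1) := by
  have hrep (v : {v : V // v ≠ 0}) : φ (Projectivization.mk K v.1 v.2).rep ≠ 0 ↔ φ v ≠ 0 := by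
    obtain ⟨a, ha⟩ := Projectivization.exists_smul_eq_mk_rep K v.1 v.2
    simp [← ha, Units.smul_def]
  calc #{v | φ v ≠ 0}
      = Fintype.card {v : {v : V // v ≠ 0} // φ v ≠ 0} := by
        rw [← Fintype.card_subtype]
        refine Fintype.card_congr (Equiv.subtypeSubtypeEquivSubtype fun h => ?_).symm
        rintro rfl
        exact h (map_zero φ)
    _ = Fintype.card {x : ℙ K V × Kˣ // φ x.1.rep ≠ 0} :=
        Fintype.card_congr <|
          (Projectivization.nonZeroEquivProjectivizationProdUnits K V).subtypeEquiv
            fun v => (hrep v).symm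
    _ = _ := by
        rw [Fintype.card_subtype, ← Fintype.card_units]
        convert card_filter_fst (β := Kˣ) fun p : ℙ K V => φ p.rep ≠ 0

theorem card_mul_hammingNorm_of_mem_simplexCode {V : Type*} [AddCommGroup V] [Module K V]
    [Fintype K] [Fintype V] [Fintype (ℙ K V)] {c : ℙ K V → K} (hc : c ∈ simplexCode K V)
    (hc0 : c ≠ 0) : Fintype.card K * hammingNorm c = Fintype.card V := by
  obtain ⟨φ, rfl⟩ := hc
  have hφ : φ ≠ 0 := by
    rintro rfl
    exact hc0 (map_zero _)
  have hcount := φ.card_mul_card_filter_ne_zero hφ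
  rw [card_filter_ne_zero_eq_card_filter_rep_mul, ← mul_assoc, mul_comm] at hcount
  exact Nat.eq_of_mul_eq_mul_left (Nat.sub_pos_of_lt Fintype.one_lt_card) hcount

theorem codeSupport_simplexCode {V : Type*} [AddCommGroup V] [Module K V] [Fintype (ℙ K V)] :
    codeSupport (simplexCode K V) = univ := by
  refine eq_univ_of_forall fun p => mem_codeSupport.2 ?_
  obtain ⟨φ, hφ⟩ := Module.Projective.exists_dual_ne_zero K p.rep_nonzero
  exact ⟨_, ⟨φ, rfl⟩, hφ⟩

end Constructions

def divisibleCodeLengths (K : Type) [Field K] (Δ : ℕ) : AddSubmonoid ℕ where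
  carrier := {n | ∃ (ι : Type) (_ : Fintype ι) (C : Submodule K (ι → K)),
    (∀ c ∈ C, Δ ∣ hammingNorm c) ∧ #(codeSupport C) = n}
  zero_mem' := ⟨Empty, inferInstance, ⊥, fun c _ => by simp [hammingNorm],
    card_eq_zero.2 (eq_empty_of_isEmpty _)⟩
  add_mem' := by
    rintro _ _ ⟨ι₁, _, C₁, hC₁, rfl⟩ ⟨ι₂, _, C₂, hC₂, rfl⟩
    refine ⟨ι₁ ⊕ ι₂, inferInstance, directSumCode C₁ C₂, fun c hc => ?_,
      card_codeSupport_directSumCode C₁ C₂⟩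
    rw [hammingNorm_sum_type]
    exact dvd_add (hC₁ _ (mem_directSumCode.1 hc).1) (hC₂ _ (mem_directSumCode.1 hc).2)

section Lengths

variable {F} {K : Type} [Field K]

theorem mem_divisibleCodeLengths_iff {Δ n : ℕ} :
    n ∈ divisibleCodeLengths F Δ ↔
      ∃ (m : ℕ) (C : Submodule F (Fin m → F)), IsDivisibleCode F Δ C ∧ effLength F C = n := by
  constructor
  · rintro ⟨ι, _, C, hC, rfl⟩
    let e := (Fintype.equivFin ι).symm
    refine ⟨Fintype.card ι, C.map (LinearEquiv.funCongrLeft F F e).toLinearMap, ?_, ?_⟩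
    · rintro _ ⟨c, hc, rfl⟩
      show Δ ∣ hammingNorm (c ∘ e)
      rw [hammingNorm_comp_equiv]
      exact hC c hc
    · rw [effLength_eq_card_codeSupport]
      refine card_equiv e fun i => ?_
      simp only [mem_codeSupport, Submodule.mem_map]
      constructor
      · rintro ⟨_, ⟨c, hc, rfl⟩, hci⟩
        exact ⟨c, hc, hci⟩
      · rintro ⟨c, hc, hci⟩
        exact ⟨_, ⟨c, hc, rfl⟩, hci⟩
  · rintro ⟨m, C, hC, rfl⟩
    exact ⟨Fin m, inferInstance, C, hC, (effLength_eq_card_codeSupport C).symm⟩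

theorem divisibleCodeLengths_le_of_dvd {Δ Δ' : ℕ} (h : Δ' ∣ Δ) :
    divisibleCodeLengths K Δ ≤ divisibleCodeLengths K Δ' := by
  rintro _ ⟨ι, _, C, hC, rfl⟩
  exact ⟨ι, _, C, fun c hc => h.trans (hC c hc), rfl⟩

theorem mul_mem_divisibleCodeLengths {Δ n : ℕ} (r : ℕ) (h : n ∈ divisibleCodeLengths K Δ) :
    r * n ∈ divisibleCodeLengths K (r * Δ) := by
  obtain ⟨ι, _, C, hC, rfl⟩ := h
  refine ⟨ι × Fin r, inferInstance, repetitionCode C (Fin r), ?_, ?_⟩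
  · rintro _ ⟨c, hc, rfl⟩
    show r * Δ ∣ hammingNorm (c ∘ Prod.fst)
    rw [hammingNorm_comp_fst, Fintype.card_fin, mul_comm r Δ]
    exact mul_dvd_mul_right (hC c hc) r
  · rw [card_codeSupport_repetitionCode, Fintype.card_fin, mul_comm]

theorem card_projectivization_mem_divisibleCodeLengths [Fintype K] (k : ℕ) :
    Nat.card (ℙ K (Fin (k + 1) → K)) ∈ divisibleCodeLengths K (Fintype.card K ^ k) := by
  let := Fintype.ofFinite (ℙ K (Fin (k + 1) → K))
  refine ⟨_, inferInstance, simplexCode K (Fin (k + 1) → K), fun c hc => ?_, ?_⟩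
  · rcases eq_or_ne c 0 with rfl | hc0
    · simp
    have hw := card_mul_hammingNorm_of_mem_simplexCode hc hc0
    rw [Fintype.card_fun, Fintype.card_fin, pow_succ'] at hw
    rw [Nat.eq_of_mul_eq_mul_left Fintype.card_pos hw]
  · rw [codeSupport_simplexCode, card_univ, Nat.card_eq_fintype_card]

theorem eight_mul_add_mem_divisibleCodeLengths [Fintype K] (hK : Fintype.card K = 4)
    (x y z : ℕ) : 8 * x + 10 * y + 21 * z ∈ divisibleCodeLengths K 8 := by
  have hcard (k : ℕ) : Nat.card (ℙ K (Fin (k + 1) → K)) = (4 ^ (k + 1) - 1) / 3 := by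
    rw [Projectivization.card'', Nat.card_fun, Nat.card_fin, Nat.card_eq_fintype_card, hK]
  have hsimplex (k : ℕ) := card_projectivization_mem_divisibleCodeLengths (K := K) k
  simp only [hcard, hK] at hsimplex
  have h8 : 8 ∈ divisibleCodeLengths K 8 := by
    simpa using mul_mem_divisibleCodeLengths 8 (hsimplex 0)
  have h10 : 10 ∈ divisibleCodeLengths K 8 := by
    simpa using mul_mem_divisibleCodeLengths 2 (hsimplex 1)
  have h21 : 21 ∈ divisibleCodeLengths K 8 :=
    divisibleCodeLengths_le_of_dvd (by norm_num) (hsimplex 2)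
  simpa [mul_comm] using add_mem (add_mem (nsmul_mem h8 x) (nsmul_mem h10 y)) (nsmul_mem h21 z)

end Lengths

theorem stmt_18 (hF : Fintype.card F = 4) (n : ℕ) :
    ((∃ (m : ℕ) (C : Submodule F (Fin m → F)),
        IsDivisibleCode F 8 C ∧ effLength F C = n) ↔
      n ∉ (({2, 4, 6, 12, 14, 22} ∪
        {1, 3, 5, 7, 9, 11, 13, 15, 17, 19, 23, 25, 27, 33, 35, 43}) : Set ℕ)) ∧
    ((∃ (m : ℕ) (C : Submodule F (Fin m → F)),
        IsDivisibleCode F 8 C ∧ effLength F C = n) ↔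
      ∃ x y z : ℕ, n = 8 * x + 10 * y + 21 * z) := by
  rw [← mem_divisibleCodeLengths_iff]
  have hnec : n ∈ divisibleCodeLengths F 8 → n ∉ exceptionalLengths := by
    rintro ⟨ι, _, C, hC, rfl⟩
    exact card_codeSupport_notMem_exceptionalLengths hF hC
  have hrep : n ∉ exceptionalLengths → ∃ x y z : ℕ, n = 8 * x + 10 * y + 21 * z :=
    exists_eq_of_notMem_exceptionalLengths
  have hsuff : (∃ x y z : ℕ, n = 8 * x + 10 * y + 21 * z) → n ∈ divisibleCodeLengths F 8 := by
    rintro ⟨x, y, z, rfl⟩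
    exact eight_mul_add_mem_divisibleCodeLengths hF x y z
  exact ⟨⟨hnec, hsuff ∘ hrep⟩, ⟨hrep ∘ hnec, hsuff⟩⟩

end
end

section
/- Let n ≥ 1 be an integer. There exist a length m and a 2-divisible linear code over F_4 of effective length n if and only if n is even or n ≥ 5; equivalently, if and only if n ∉ {1, 3}. -/
open Module Finset

noncomputable section
open scoped Classical

variable (F : Type) [Field F] [Fintype F]

section Aux
variable {F}

omit [Fintype F] in
lemma hn_eq' {m : ℕ} (c : Fin m → F) :
    hammingNorm c = (univ.filter (fun i => c i ≠ 0)).card := rfl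

lemma effLength_eq' {m : ℕ} (C : Submodule F (Fin m → F)) :
    effLength F C = (univ.filter (fun i => ∃ c ∈ C, c i ≠ 0)).card := by
  rw [effLength, Nat.card_eq_fintype_card, Fintype.card_subtype]

lemma two_eq_zero' (hF : Fintype.card F = 4) : (2 : F) = 0 := by
  have h : ((Fintype.card F : ℕ) : F) = 0 := FiniteField.cast_card_eq_zero F
  rw [hF] at h
  push_cast at h
  exact mul_self_eq_zero.mp (by rw [show (2:F) * 2 = 4 by norm_num]; exact h)

lemma exists_omega' (hF : Fintype.card F = 4) : ∃ ω : F, ω ≠ 0 ∧ ω ≠ 1 := by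
  by_contra h
  push_neg at h
  have hsub : (univ : Finset F) ⊆ {0, 1} := by
    intro x _
    rcases eq_or_ne x 0 with h0 | h0
    · simp [h0]
    · simp [h x h0]
  have hc := Finset.card_le_card hsub
  have h2 : ({0, 1} : Finset F).card ≤ 2 :=
    (Finset.card_insert_le _ _).trans (by simp)
  rw [card_univ, hF] at hc
  omega

lemma mem4' (hF : Fintype.card F = 4) {ω : F} (hω0 : ω ≠ 0) (hω1 : ω ≠ 1)
    (x : F) (hx : x ≠ 0) : x = 1 ∨ x = ω ∨ x = 1 + ω := by
  have h2 : (2 : F) = 0 := two_eq_zero' hF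
  have hsum : (1 : F) + ω ≠ 0 := fun h => hω1 (by linear_combination h - h2)
  have hcard : ({0, 1, ω, 1 + ω} : Finset F).card = 4 := by
    rw [Finset.card_insert_of_notMem, Finset.card_insert_of_notMem,
      Finset.card_insert_of_notMem, Finset.card_singleton]
    · simp only [mem_singleton]
      intro h
      exact (one_ne_zero : (1:F) ≠ 0) (by linear_combination -h)
    · simp only [mem_insert, mem_singleton]
      push_neg
      exact ⟨hω1.symm, fun h => hω0 (by linear_combination -(h : (1:F) = 1 + ω))⟩
    · simp only [mem_insert, mem_singleton]
      push_neg
      exact ⟨fun h => one_ne_zero h.symm, fun h => hω0 h.symm, fun h => hsum h.symm⟩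
  have huniv : ({0, 1, ω, 1 + ω} : Finset F) = univ :=
    Finset.eq_univ_of_card _ (by rw [hcard, hF])
  have hx' : x ∈ ({0, 1, ω, 1 + ω} : Finset F) := huniv ▸ mem_univ x
  simp only [mem_insert, mem_singleton] at hx'
  tauto

lemma card_filter_ne' {n : ℕ} (t : ℕ) (ht : t < n) :
    (univ.filter (fun i : Fin n => i.val ≠ t)).card = n - 1 := by
  have h2 := Finset.card_filter_add_card_filter_not
    (s := (univ : Finset (Fin n))) (p := fun i => i.val = t)
  have h1 : (univ.filter (fun i : Fin n => i.val = t)) = {⟨t, ht⟩} := by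
    ext i; simp [Fin.ext_iff]
  rw [h1] at h2
  simp only [card_singleton, card_univ, Fintype.card_fin, ne_eq] at h2 ⊢
  omega

lemma no_small_odd' (hF : Fintype.card F = 4) {m : ℕ} (C : Submodule F (Fin m → F))
    (hdiv : IsDivisibleCode F 2 C) : effLength F C ≠ 1 ∧ effLength F C ≠ 3 := by
  set T : Finset (Fin m) := univ.filter (fun i => ∃ c ∈ C, c i ≠ 0) with hT
  have hwt_le : ∀ c ∈ C, hammingNorm c ≤ T.card := by
    intro c hc
    rw [hn_eq']
    apply Finset.card_le_card
    intro i hi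
    simp only [mem_filter, mem_univ, true_and] at hi
    simp only [hT, mem_filter, mem_univ, true_and]
    exact ⟨c, hc, hi⟩
  have hwt_pos : ∀ c ∈ C, c ≠ 0 → 1 ≤ hammingNorm c := by
    intro c _ hc0
    obtain ⟨i, hi⟩ := Function.ne_iff.mp hc0
    rw [hn_eq']
    refine Finset.card_pos.mpr ⟨i, ?_⟩
    simp only [mem_filter, mem_univ, true_and]
    simpa using hi
  constructor
  · intro h1
    rw [effLength_eq' C, ← hT] at h1
    obtain ⟨i, hi⟩ := Finset.card_pos.mp (by omega : 0 < T.card)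
    simp only [hT, mem_filter, mem_univ, true_and] at hi
    obtain ⟨c, hc, hci⟩ := hi
    have hle := hwt_le c hc
    rw [h1] at hle
    have hge := hwt_pos c hc (fun h => hci (by rw [h]; rfl))
    obtain ⟨t, ht⟩ := hdiv c hc
    omega
  · intro h3
    rw [effLength_eq' C, ← hT] at h3
    set Cs : Finset (Fin m → F) := (C : Set (Fin m → F)).toFinset with hCs
    have hmem : ∀ c, c ∈ Cs ↔ c ∈ C := fun c => Set.mem_toFinset
    have h0 : (0 : Fin m → F) ∈ Cs := (hmem 0).mpr C.zero_mem
    have hN1 : 1 ≤ Cs.card := Finset.card_pos.mpr ⟨0, h0⟩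
    have hwt : ∀ c ∈ Cs, c ≠ 0 → hammingNorm c = 2 := by
      intro c hc hc0
      have hcC := (hmem c).mp hc
      obtain ⟨t, ht⟩ := hdiv c hcC
      have hle := hwt_le c hcC
      rw [h3] at hle
      have hge := hwt_pos c hcC hc0
      omega
    have hsum1 : ∑ c ∈ Cs, hammingNorm c = 2 * (Cs.card - 1) := by
      rw [← Finset.add_sum_erase _ _ h0, hammingNorm_zero, zero_add]
      rw [Finset.sum_congr rfl
        (fun c hc => hwt c (Finset.mem_of_mem_erase hc) (Finset.ne_of_mem_erase hc))]
      rw [Finset.sum_const, Finset.card_erase_of_mem h0, smul_eq_mul, Nat.mul_comm]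
    have hsum2 : ∑ c ∈ Cs, hammingNorm c
        = ∑ i ∈ T, (Cs.filter (fun c => c i ≠ 0)).card := by
      have hstep : ∀ c ∈ Cs, hammingNorm c = ∑ i : Fin m, if c i ≠ 0 then 1 else 0 := by
        intro c _
        rw [hn_eq', Finset.card_filter]
      rw [Finset.sum_congr rfl hstep, Finset.sum_comm]
      rw [← Finset.sum_subset (Finset.subset_univ T)]
      · exact Finset.sum_congr rfl fun i _ => (Finset.card_filter _ _).symm
      · intro i _ hiT
        refine Finset.sum_eq_zero fun c hc => ?_
        simp only [hT, mem_filter, mem_univ, true_and, not_exists] at hiT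
        simp only [ne_eq, ite_eq_right_iff]
        intro hne
        exact absurd (by push_neg at hiT; exact hiT c ((hmem c).mp hc)) hne
    have hfib : ∀ i ∈ T, Cs.card = 4 * (Cs.filter (fun c => c i = 0)).card := by
      intro i hiT
      simp only [hT, mem_filter, mem_univ, true_and] at hiT
      obtain ⟨c₀, hc₀C, hc₀i⟩ := hiT
      have hcards : ∀ x : F, (Cs.filter (fun c => c i = x)).card
          = (Cs.filter (fun c => c i = 0)).card := by
        intro x
        apply Finset.card_bij' (fun c _ => c - (x * (c₀ i)⁻¹) • c₀)
          (fun c _ => c + (x * (c₀ i)⁻¹) • c₀)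
        · intro c hc
          simp only [mem_filter] at hc ⊢
          refine ⟨(hmem _).mpr (C.sub_mem ((hmem c).mp hc.1) (C.smul_mem _ hc₀C)), ?_⟩
          rw [Pi.sub_apply, Pi.smul_apply, smul_eq_mul, hc.2, mul_assoc,
            inv_mul_cancel₀ hc₀i, mul_one, sub_self]
        · intro c hc
          simp only [mem_filter] at hc ⊢
          refine ⟨(hmem _).mpr (C.add_mem ((hmem c).mp hc.1) (C.smul_mem _ hc₀C)), ?_⟩
          rw [Pi.add_apply, Pi.smul_apply, smul_eq_mul, hc.2, mul_assoc,
            inv_mul_cancel₀ hc₀i, mul_one, zero_add]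
        · intro c _; abel
        · intro c _; abel
      rw [Finset.card_eq_sum_card_fiberwise
        (f := fun c => c i) (t := (univ : Finset F)) (fun c _ => mem_univ _)]
      rw [Finset.sum_congr rfl (fun x _ => hcards x), Finset.sum_const, smul_eq_mul,
        card_univ, hF]
    set N := Cs.card with hN
    set s := ∑ i ∈ T, (Cs.filter (fun c => c i = 0)).card with hs
    have h4s : 4 * s = 3 * N := by
      rw [hs, Finset.mul_sum]
      rw [Finset.sum_congr rfl (fun i hi => (hfib i hi).symm)]
      rw [Finset.sum_const, h3, smul_eq_mul]
    have hsplit : s + ∑ i ∈ T, (Cs.filter (fun c => c i ≠ 0)).card = 3 * N := by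
      rw [hs, ← Finset.sum_add_distrib]
      have : ∀ i ∈ T, (Cs.filter (fun c => c i = 0)).card
          + (Cs.filter (fun c => c i ≠ 0)).card = N := by
        intro i _
        simpa using Finset.card_filter_add_card_filter_not
          (s := Cs) (p := fun c => c i = 0)
      rw [Finset.sum_congr rfl this, Finset.sum_const, h3, smul_eq_mul]
    have hkey : 2 * (N - 1) = ∑ i ∈ T, (Cs.filter (fun c => c i ≠ 0)).card :=
      hsum1.symm.trans hsum2
    have hkey2 : s + 2 * (N - 1) = 3 * N := by rw [hkey]; exact hsplit
    clear hs hN hkey hsplit hsum1 hsum2 hfib hwt hmem h0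
    clear_value s N
    omega

lemma exists_code_even' {n : ℕ} (heven : Even n) :
    ∃ (m : ℕ) (C : Submodule F (Fin m → F)),
      IsDivisibleCode F 2 C ∧ effLength F C = n := by
  refine ⟨n, Submodule.span F {fun _ => (1 : F)}, ?_, ?_⟩
  · intro c hc
    rw [Submodule.mem_span_singleton] at hc
    obtain ⟨a, rfl⟩ := hc
    rcases eq_or_ne a 0 with rfl | ha
    · rw [zero_smul, hammingNorm_zero]; exact dvd_zero 2
    · have hall : univ.filter (fun i : Fin n => (a • fun _ => (1 : F)) i ≠ 0) = univ :=
        Finset.filter_true_of_mem (fun i _ => by simpa using ha)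
      rw [hn_eq', hall, card_univ, Fintype.card_fin]
      exact heven.two_dvd
  · have hall : univ.filter
        (fun i : Fin n => ∃ c ∈ Submodule.span F {fun _ => (1 : F)}, c i ≠ 0) = univ :=
      Finset.filter_true_of_mem (fun i _ =>
        ⟨fun _ => 1, Submodule.mem_span_singleton_self _, one_ne_zero⟩)
    rw [effLength_eq', hall, card_univ, Fintype.card_fin]

lemma exists_code_odd' (hF : Fintype.card F = 4) {n : ℕ} (hodd : ¬ Even n) (h5 : 5 ≤ n) :
    ∃ (m : ℕ) (C : Submodule F (Fin m → F)),
      IsDivisibleCode F 2 C ∧ effLength F C = n := by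
  obtain ⟨ω, hω0, hω1⟩ := exists_omega' hF
  have h2 : (2 : F) = 0 := two_eq_zero' hF
  have hω2 : (1 : F) + ω ≠ 0 := fun h => hω1 (by linear_combination h - h2)
  have hmod : n % 2 = 1 := Nat.not_even_iff.mp hodd
  set u : Fin n → F := fun i => if i.val = 1 then 0 else 1 with hu
  set v : Fin n → F := fun i => if i.val = 1 then 1 else if i.val = 2 then 1
    else if i.val = 3 then ω else if i.val = 4 then 1 + ω else 0 with hv
  refine ⟨n, Submodule.span F {u, v}, ?_, ?_⟩
  · intro c hc
    rw [Submodule.mem_span_pair] at hc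
    obtain ⟨a, b, rfl⟩ := hc
    rcases eq_or_ne a 0 with rfl | ha
    · rcases eq_or_ne b 0 with rfl | hb
      · rw [zero_smul, zero_smul, add_zero, hammingNorm_zero]
        exact dvd_zero 2
      · -- weight 4
        have hall : univ.filter (fun i : Fin n => ((0:F) • u + b • v) i ≠ 0)
            = ({⟨1, by omega⟩, ⟨2, by omega⟩, ⟨3, by omega⟩, ⟨4, by omega⟩} :
              Finset (Fin n)) := by
          ext i
          simp only [mem_filter, mem_univ, true_and, mem_insert, mem_singleton,
            Fin.ext_iff, Pi.add_apply, Pi.smul_apply, smul_eq_mul, hu, hv]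
          split_ifs with hi1 hi2 hi3 hi4
          · exact iff_of_true (by simpa using hb) (by omega)
          · exact iff_of_true (by simpa using hb) (by omega)
          · exact iff_of_true (by simpa using mul_ne_zero hb hω0) (by omega)
          · exact iff_of_true (by simpa using mul_ne_zero hb hω2) (by omega)
          · exact iff_of_false (by simp) (by omega)
        rw [hn_eq', hall]
        rw [Finset.card_insert_of_notMem (by simp [Fin.ext_iff]),
          Finset.card_insert_of_notMem (by simp [Fin.ext_iff]),
          Finset.card_insert_of_notMem (by simp [Fin.ext_iff]),
          Finset.card_singleton]
        omega
    · rcases eq_or_ne b 0 with rfl | hb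
      · have hall : univ.filter (fun i : Fin n => (a • u + (0:F) • v) i ≠ 0)
            = univ.filter (fun i : Fin n => i.val ≠ 1) := by
          apply Finset.filter_congr
          intro i _
          simp only [Pi.add_apply, Pi.smul_apply, smul_eq_mul, hu, hv]
          split_ifs with hi1 hi2 hi3 hi4
          · exact iff_of_false (by simp) (not_not_intro hi1)
          · exact iff_of_true (by simpa using ha) (by omega)
          · exact iff_of_true (by simpa using ha) (by omega)
          · exact iff_of_true (by simpa using ha) (by omega)
          · exact iff_of_true (by simpa using ha) (by omega)
        rw [hn_eq', hall, card_filter_ne' 1 (by omega)]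
        omega
      · have hx : a = (a * b⁻¹) * b := by
          rw [mul_assoc, inv_mul_cancel₀ hb, mul_one]
        rcases mem4' hF hω0 hω1 (a * b⁻¹) (mul_ne_zero ha (inv_ne_zero hb)) with h | h | h
        · rw [h, one_mul] at hx
          subst hx
          have hall : univ.filter (fun i : Fin n => (a • u + a • v) i ≠ 0)
              = univ.filter (fun i : Fin n => i.val ≠ 2) := by
            apply Finset.filter_congr
            intro i _
            simp only [Pi.add_apply, Pi.smul_apply, smul_eq_mul, hu, hv]
            split_ifs with hi1 hi2 hi3 hi4
            · exact iff_of_true (by simpa using hb) (by omega)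
            · exact iff_of_false (not_not_intro (by linear_combination a * h2))
                (not_not_intro hi2)
            · exact iff_of_true
                (fun h' => mul_ne_zero hb hω2 (by linear_combination h')) (by omega)
            · exact iff_of_true
                (fun h' => mul_ne_zero hb hω0 (by linear_combination h' - a * h2))
                (by omega)
            · exact iff_of_true (by simpa using hb) (by omega)
          rw [hn_eq', hall, card_filter_ne' 2 (by omega)]
          omega
        · rw [h] at hx
          subst hx
          have hall : univ.filter (fun i : Fin n => ((ω * b) • u + b • v) i ≠ 0)
              = univ.filter (fun i : Fin n => i.val ≠ 3) := by
            apply Finset.filter_congr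
            intro i _
            simp only [Pi.add_apply, Pi.smul_apply, smul_eq_mul, hu, hv]
            split_ifs with hi1 hi2 hi3 hi4
            · exact iff_of_true (by simpa using hb) (by omega)
            · exact iff_of_true
                (fun h' => mul_ne_zero hb hω2 (by linear_combination h')) (by omega)
            · exact iff_of_false
                (not_not_intro (by linear_combination ω * b * h2)) (not_not_intro hi3)
            · exact iff_of_true
                (fun h' => hb (by linear_combination h' - ω * b * h2)) (by omega)
            · exact iff_of_true (by simpa using mul_ne_zero hω0 hb) (by omega)
          rw [hn_eq', hall, card_filter_ne' 3 (by omega)]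
          omega
        · rw [h] at hx
          subst hx
          have hall : univ.filter (fun i : Fin n => (((1 + ω) * b) • u + b • v) i ≠ 0)
              = univ.filter (fun i : Fin n => i.val ≠ 4) := by
            apply Finset.filter_congr
            intro i _
            simp only [Pi.add_apply, Pi.smul_apply, smul_eq_mul, hu, hv]
            split_ifs with hi1 hi2 hi3 hi4
            · exact iff_of_true (by simpa using hb) (by omega)
            · exact iff_of_true
                (fun h' => mul_ne_zero hω0 hb (by linear_combination h' - b * h2))
                (by omega)
            · exact iff_of_true
                (fun h' => hb (by linear_combination h' - ω * b * h2)) (by omega)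
            · exact iff_of_false
                (not_not_intro (by linear_combination (1 + ω) * b * h2))
                (not_not_intro hi4)
            · exact iff_of_true (by simpa using mul_ne_zero hω2 hb) (by omega)
          rw [hn_eq', hall, card_filter_ne' 4 (by omega)]
          omega
  · have hall : univ.filter
        (fun i : Fin n => ∃ c ∈ Submodule.span F {u, v}, c i ≠ 0) = univ := by
      apply Finset.filter_true_of_mem
      intro i _
      by_cases hi1 : i.val = 1
      · exact ⟨v, Submodule.subset_span (by simp), by simp [hv, hi1]⟩
      · exact ⟨u, Submodule.subset_span (by simp), by simp [hu, hi1]⟩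
    rw [effLength_eq', hall, card_univ, Fintype.card_fin]

end Aux

/-- For `n ≥ 1`, a `2`-divisible linear code over `F_4` of effective
length `n` exists iff `n` is even or `n ≥ 5`; equivalently, iff `n ∉ {1, 3}`. -/
theorem stmt_19 (hF : Fintype.card F = 4) (n : ℕ) (hn : 1 ≤ n) :
    ((∃ (m : ℕ) (C : Submodule F (Fin m → F)),
        IsDivisibleCode F 2 C ∧ effLength F C = n) ↔ (Even n ∨ 5 ≤ n)) ∧
    ((∃ (m : ℕ) (C : Submodule F (Fin m → F)),
        IsDivisibleCode F 2 C ∧ effLength F C = n) ↔ (n ≠ 1 ∧ n ≠ 3)) := by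
  have h1 : (∃ (m : ℕ) (C : Submodule F (Fin m → F)),
      IsDivisibleCode F 2 C ∧ effLength F C = n) ↔ (Even n ∨ 5 ≤ n) := by
    constructor
    · rintro ⟨m, C, hdiv, hlen⟩
      by_contra hcon
      push_neg at hcon
      obtain ⟨hne, hlt⟩ := hcon
      have hmod : n % 2 = 1 := Nat.not_even_iff.mp hne
      obtain ⟨hC1, hC3⟩ := no_small_odd' hF C hdiv
      have h13 : n = 1 ∨ n = 3 := by omega
      rcases h13 with rfl | rfl
      · exact hC1 hlen
      · exact hC3 hlen
    · intro h
      by_cases he : Even n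
      · exact exists_code_even' he
      · refine exists_code_odd' hF he ?_
        rcases h with h | h
        · exact absurd h he
        · exact h
  refine ⟨h1, h1.trans ?_⟩
  rw [Nat.even_iff]
  omega

end
end
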